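/- arXiv:math/0610335 — 3 statements merged into one kernel-verified Lean document; each statement's English description precedes it below -/
import Mathlib

section
/- For any complex numbers a, b with a, b, a+b not integers, Γ(a)Γ(1-a-b)/Γ(1-b) + Γ(b)Γ(1-a-b)/Γ(1-a) − Γ(a)Γ(b)/Γ(a+b) = √π · (Γ((1-a-b)/2)/Γ((a+b)/2)) · (Γ((1+a)/2)/Γ((2-a)/2)) · (Γ((1+b)/2)/Γ((2-b)/2)). -/
/-!
Reflection turns each term on the left into `Γ(a) Γ(b) Γ(1-a-b) sin(π x) / π` with
`x = b, a, a + b`, so the left side is `Γ(a) Γ(b) Γ(1-a-b) / π` times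
`sin πa + sin πb - sin π(a+b) = 4 sin (πa/2) sin (πb/2) sin (π(a+b)/2)`.
On the right, Legendre duplication at `s = a/2, b/2, (1-a-b)/2` followed by reflection turns each
quotient of half-argument Gamma values into `2^(1-2s) / √π · Γ(2s)` times one of these sines,
and the powers of `2` and `√π` multiply to `4 / π`.
-/

open Complex Real

namespace Complex

theorem ofReal_sqrt_pi_sq : (√π : ℂ) ^ 2 = π := by
  rw [← ofReal_pow, sq_sqrt pi_pos.le]

theorem inv_Gamma_one_sub_eq_Gamma_mul_sin_div {z : ℂ} (hz : ∀ m : ℕ, z ≠ -m) :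
    (Gamma (1 - z))⁻¹ = Gamma z * sin (π * z) / π := by
  have reflection := Gamma_mul_Gamma_one_sub z
  by_cases hsin : sin (π * z) = 0
  -- at positive integers `Γ (1 - z)` sits at a pole, where Mathlib sets it to `0`, and `π / 0 = 0`
  · rw [hsin, div_zero, mul_eq_zero, or_iff_right (Gamma_ne_zero hz)] at reflection
    rw [reflection, hsin, inv_zero, mul_zero, zero_div]
  · rw [eq_div_iff hsin] at reflection
    rw [inv_eq_iff_eq_inv, inv_div, eq_div_iff (mul_ne_zero (Gamma_ne_zero hz) hsin)]
    linear_combination reflection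

theorem inv_Gamma_eq_Gamma_one_sub_mul_sin_div {z : ℂ} (hz : ∀ m : ℕ, 1 - z ≠ -m) :
    (Gamma z)⁻¹ = Gamma (1 - z) * sin (π * z) / π := by
  simpa only [sub_sub_cancel, mul_sub, mul_one, sin_pi_sub]
    using inv_Gamma_one_sub_eq_Gamma_mul_sin_div hz

theorem Gamma_one_add_div_two_div_Gamma_two_sub_div_two {z : ℂ} (hz : ∀ m : ℕ, z / 2 ≠ -m) :
    Gamma ((1 + z) / 2) / Gamma ((2 - z) / 2)
      = 2 ^ (1 - z) / (√π : ℂ) * Gamma z * sin (π * z / 2) := by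
  have dup := Gamma_mul_Gamma_add_half (z / 2)
  rw [mul_div_cancel₀ z two_ne_zero] at dup
  have hsqrt0 : (√π : ℂ) ≠ 0 := ofReal_ne_zero.mpr (sqrt_ne_zero'.mpr pi_pos)
  rw [show (1 + z) / 2 = z / 2 + 1 / 2 by ring, show (2 - z) / 2 = 1 - z / 2 by ring,
    div_eq_mul_inv, inv_Gamma_one_sub_eq_Gamma_mul_sin_div hz, ← mul_div_assoc (π : ℂ) z 2]
  calc Gamma (z / 2 + 1 / 2) * (Gamma (z / 2) * sin (π * z / 2) / π)
      = Gamma (z / 2) * Gamma (z / 2 + 1 / 2) * sin (π * z / 2) / (√π : ℂ) ^ 2 := by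
        rw [ofReal_sqrt_pi_sq]; ring
    _ = _ := by rw [dup]; field_simp

theorem Gamma_one_sub_div_two_div_Gamma_div_two {w : ℂ} (hw : ∀ m : ℕ, 1 - w / 2 ≠ -m) :
    Gamma ((1 - w) / 2) / Gamma (w / 2)
      = 2 ^ w / (√π : ℂ) * Gamma (1 - w) * sin (π * w / 2) := by
  have dup := Gamma_mul_Gamma_add_half ((1 - w) / 2)
  rw [show (1 - w) / 2 + 1 / 2 = 1 - w / 2 by ring, mul_div_cancel₀ _ two_ne_zero,
    sub_sub_cancel] at dup
  have hsqrt0 : (√π : ℂ) ≠ 0 := ofReal_ne_zero.mpr (sqrt_ne_zero'.mpr pi_pos)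
  rw [div_eq_mul_inv, inv_Gamma_eq_Gamma_one_sub_mul_sin_div hw, ← mul_div_assoc (π : ℂ) w 2]
  calc Gamma ((1 - w) / 2) * (Gamma (1 - w / 2) * sin (π * w / 2) / π)
      = Gamma ((1 - w) / 2) * Gamma (1 - w / 2) * sin (π * w / 2) / (√π : ℂ) ^ 2 := by
        rw [ofReal_sqrt_pi_sq]; ring
    _ = _ := by rw [dup]; field_simp

theorem sin_add_sin_sub_sin_add (x y : ℂ) :
    sin x + sin y - sin (x + y) = 4 * sin (x / 2) * sin (y / 2) * sin ((x + y) / 2) := by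
  obtain ⟨u, rfl⟩ : ∃ u, x = 2 * u := ⟨x / 2, by ring⟩
  obtain ⟨v, rfl⟩ : ∃ v, y = 2 * v := ⟨y / 2, by ring⟩
  rw [← mul_add, mul_div_cancel_left₀ _ two_ne_zero, mul_div_cancel_left₀ _ two_ne_zero,
    mul_div_cancel_left₀ _ two_ne_zero, sin_two_mul, sin_two_mul, sin_two_mul, sin_add, cos_add]
  linear_combination (-2 * sin v * cos v) * sin_sq_add_cos_sq u
    - 2 * sin u * cos u * sin_sq_add_cos_sq v

end Complex

theorem gamma_identity_minus (a b : ℂ) (ha : ∀ n : ℤ, a ≠ n) (hb : ∀ n : ℤ, b ≠ n)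
    (hab : ∀ n : ℤ, a + b ≠ n) :
    Complex.Gamma a * Complex.Gamma (1 - a - b) / Complex.Gamma (1 - b)
      + Complex.Gamma b * Complex.Gamma (1 - a - b) / Complex.Gamma (1 - a)
      - Complex.Gamma a * Complex.Gamma b / Complex.Gamma (a + b)
    = (Real.sqrt Real.pi : ℂ)
      * (Complex.Gamma ((1 - a - b) / 2) / Complex.Gamma ((a + b) / 2))
      * (Complex.Gamma ((1 + a) / 2) / Complex.Gamma ((2 - a) / 2))
      * (Complex.Gamma ((1 + b) / 2) / Complex.Gamma ((2 - b) / 2)) := by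
  have ha' : ∀ m : ℕ, a ≠ -m := fun m => by exact_mod_cast ha (-m)
  have hb' : ∀ m : ℕ, b ≠ -m := fun m => by exact_mod_cast hb (-m)
  have hab' : ∀ m : ℕ, 1 - (a + b) ≠ -m := fun m h =>
    hab (1 + m) (by push_cast; linear_combination -h)
  have ha2 : ∀ m : ℕ, a / 2 ≠ -m := fun m h =>
    ha (-2 * m) (by push_cast; linear_combination 2 * h)
  have hb2 : ∀ m : ℕ, b / 2 ≠ -m := fun m h =>
    hb (-2 * m) (by push_cast; linear_combination 2 * h)
  have hab2 : ∀ m : ℕ, 1 - (a + b) / 2 ≠ -m := fun m h =>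
    hab (2 + 2 * m) (by push_cast; linear_combination -2 * h)
  have hpow : (2 : ℂ) ^ (a + b) * 2 ^ (1 - a) * 2 ^ (1 - b) = 4 := by
    rw [← cpow_add _ _ two_ne_zero, ← cpow_add _ _ two_ne_zero,
      show a + b + (1 - a) + (1 - b) = (2 : ℂ) by ring]
    norm_num
  rw [sub_sub]
  set G := Gamma a * Gamma b * Gamma (1 - (a + b))
  calc _ = G / π * (sin (π * a) + sin (π * b) - sin (π * a + π * b)) := by
        rw [div_eq_mul_inv, div_eq_mul_inv, div_eq_mul_inv,
          inv_Gamma_one_sub_eq_Gamma_mul_sin_div hb', inv_Gamma_one_sub_eq_Gamma_mul_sin_div ha',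
          inv_Gamma_eq_Gamma_one_sub_mul_sin_div hab', mul_add]
        ring
    _ = G / π * (4 * sin (π * a / 2) * sin (π * b / 2) * sin (π * (a + b) / 2)) := by
        rw [sin_add_sin_sub_sin_add, ← mul_add]
    _ = 2 ^ (a + b) * 2 ^ (1 - a) * 2 ^ (1 - b) / (√π : ℂ) ^ 2
          * G * sin (π * a / 2) * sin (π * b / 2) * sin (π * (a + b) / 2) := by
        rw [hpow, ofReal_sqrt_pi_sq]; ring
    _ = _ := by
        rw [Gamma_one_sub_div_two_div_Gamma_div_two hab2,
          Gamma_one_add_div_two_div_Gamma_two_sub_div_two ha2,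
          Gamma_one_add_div_two_div_Gamma_two_sub_div_two hb2]
        field_simp
        ring
end

section
/- For any complex numbers a and real r with a + ir and a − ir not non-positive integers and 1−a±ir not non-positive integers, Γ(a+ir)/Γ(1-a+ir) − Γ(a-ir)/Γ(1-a-ir) = −(2i/π) · sinh(πr) · cos(πa) · Γ(a+ir) · Γ(a−ir). -/
/-!
Write `w = a + i r` and `z = a - i r`, so that `1 - a + i r = 1 - z` and `1 - a - i r = 1 - w`.
Euler's reflection formula turns `1 / Γ(1 - z)` into `Γ(z) sin(π z) / π`, so the left-hand side
is `Γ(w) Γ(z) (sin(π z) - sin(π w)) / π`, and the difference of sines is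
`-2 i sinh(π r) cos(π a)`.
-/

open Complex

open scoped Real

namespace Complex

theorem inv_Gamma_one_sub {z : ℂ} (hz : ∀ n : ℕ, z ≠ -n) :
    (Gamma (1 - z))⁻¹ = Gamma z * sin (π * z) / π := by
  have hΓ : Gamma z ≠ 0 := Gamma_ne_zero hz
  have hπ : (π : ℂ) ≠ 0 := ofReal_ne_zero.mpr Real.pi_ne_zero
  have reflection := Gamma_mul_Gamma_one_sub z
  by_cases hsin : sin (π * z) = 0
  · -- at a positive integer `z`, `1 - z` is a pole and Mathlib's `Γ(1 - z)` is `0`, as is `0⁻¹`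
    rw [hsin, div_zero, mul_eq_zero, or_iff_right hΓ] at reflection
    rw [reflection, hsin, inv_zero, mul_zero, zero_div]
  · rw [eq_div_iff hsin] at reflection
    have hΓ' : Gamma (1 - z) ≠ 0 := fun h => hπ (by rw [← reflection, h, mul_zero, zero_mul])
    refine eq_div_of_mul_eq hπ ?_
    conv_lhs => rw [← reflection]
    field_simp

theorem sin_sub_mul_I_sub_sin_add_mul_I (x y : ℂ) :
    sin (x - y * I) - sin (x + y * I) = -(2 * I) * sinh y * cos x := by
  rw [sin_sub_sin, show (x - y * I - (x + y * I)) / 2 = -(y * I) by ring,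
    show (x - y * I + (x + y * I)) / 2 = x by ring, sin_neg, sin_mul_I]
  ring

end Complex

theorem gamma_sinh_identity_general (a : ℂ) (r : ℝ)
    (h1 : ∀ n : ℕ, a + Complex.I * r ≠ -(n : ℂ))
    (h2 : ∀ n : ℕ, a - Complex.I * r ≠ -(n : ℂ)) :
    Complex.Gamma (a + Complex.I * r) / Complex.Gamma (1 - a + Complex.I * r)
      - Complex.Gamma (a - Complex.I * r) / Complex.Gamma (1 - a - Complex.I * r)
    = -(2 * Complex.I / (Real.pi : ℂ)) * Complex.sinh (Real.pi * r) * Complex.cos (Real.pi * a)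
      * Complex.Gamma (a + Complex.I * r) * Complex.Gamma (a - Complex.I * r) := by
  rw [show 1 - a + I * r = 1 - (a - I * r) by ring, show 1 - a - I * r = 1 - (a + I * r) by ring,
    div_eq_mul_inv, div_eq_mul_inv, inv_Gamma_one_sub h2, inv_Gamma_one_sub h1]
  have hsin : sin (π * (a - I * r)) - sin (π * (a + I * r))
      = -(2 * I) * sinh (π * r) * cos (π * a) := by
    rw [← sin_sub_mul_I_sub_sin_add_mul_I]
    ring_nf
  linear_combination Gamma (a + I * r) * Gamma (a - I * r) / π * hsin

theorem gamma_sinh_identity (a : ℂ) (r : ℝ)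
    (h1 : ∀ n : ℕ, a + Complex.I * r ≠ -(n : ℂ))
    (h2 : ∀ n : ℕ, a - Complex.I * r ≠ -(n : ℂ))
    (h3 : ∀ n : ℕ, 1 - a + Complex.I * r ≠ -(n : ℂ))
    (h4 : ∀ n : ℕ, 1 - a - Complex.I * r ≠ -(n : ℂ)) :
    Complex.Gamma (a + Complex.I * r) / Complex.Gamma (1 - a + Complex.I * r)
      - Complex.Gamma (a - Complex.I * r) / Complex.Gamma (1 - a - Complex.I * r)
    = -(2 * Complex.I / (Real.pi : ℂ)) * Complex.sinh (Real.pi * r) * Complex.cos (Real.pi * a)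
      * Complex.Gamma (a + Complex.I * r) * Complex.Gamma (a - Complex.I * r) :=
  gamma_sinh_identity_general a r h1 h2
end

section
/- Let q be an odd prime and x, y, z ∈ ℤ/qℤ with z invertible mod q. Then T(x,y,z;q) = q · S(x z^{-1}, −y z^{-1}; q) · e((−x z^{-1} + y z^{-1})/q) − q − c_q(x) c_q(y), where T is the triple exponential sum ∑*_{a,b,c} e((c(a^{-1}−b^{-1}) + ax + by + cz)/q), S(m,n;q) = ∑*_{a} e((ma + n a^{-1})/q) is the Kloosterman sum, and c_q is the Ramanujan sum. -/
open Complex Finset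

/-- `e(t/q)` for a residue `t` mod `q`. -/
noncomputable def eZMod (q : ℕ) [NeZero q] (t : ZMod q) : ℂ :=
  Complex.exp (2 * Real.pi * Complex.I * (t.val : ℂ) / (q : ℂ))

/-- The triple exponential sum `T(x,y,z;q)`. -/
noncomputable def tripleSum (q : ℕ) [NeZero q] (x y z : ZMod q) : ℂ :=
  ∑ a : (ZMod q)ˣ, ∑ b : (ZMod q)ˣ, ∑ c : (ZMod q)ˣ,
    eZMod q ((c : ZMod q) * ((a⁻¹ : (ZMod q)ˣ) - (b⁻¹ : (ZMod q)ˣ))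
      + (a : ZMod q) * x + (b : ZMod q) * y + (c : ZMod q) * z)

/-- The Kloosterman sum `S(m,n;q)`. -/
noncomputable def kloosterman (q : ℕ) [NeZero q] (m n : ZMod q) : ℂ :=
  ∑ a : (ZMod q)ˣ, eZMod q (m * (a : ZMod q) + n * ((a⁻¹ : (ZMod q)ˣ) : ZMod q))

/-- The Ramanujan sum mod `q` for prime `q`, as a function of a residue. -/
noncomputable def cq (q : ℕ) (u : ZMod q) : ℂ := if u = 0 then (q : ℂ) - 1 else -1

/-!
Summing over `c` first, orthogonality of the primitive character `ψ` turns the inner sum into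
`q · [a⁻¹ + z = b⁻¹] - 1`. The `-1` part factors as the product of the two Ramanujan sums.
The pairs on the hyperbola `a⁻¹ + z = b⁻¹` are parametrized by `t = a z + 1 ∉ {0, 1}`, via
`a = (t - 1) / z` and `b = (1 - t⁻¹) / z`; along this parametrization `a x + b y` becomes
`x z⁻¹ t - y z⁻¹ t⁻¹ + (y - x) z⁻¹`, so the remaining sum is the twisted Kloosterman sum
minus its `t = 1` term, which equals `ψ 0 = 1`.
-/

section FiniteField

variable {F : Type*} [Field F] [Fintype F] [DecidableEq F]

lemma sum_units_eq_sum_erase_zero {M : Type*} [AddCommMonoid M] (f : F → M) :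
    ∑ u : Fˣ, f u = ∑ a ∈ univ.erase 0, f a :=
  sum_bij (fun u _ => (u : F)) (fun u _ => by simp) (fun _ _ _ _ => Units.val_inj.mp)
    (fun a ha => ⟨Units.mk0 a (ne_of_mem_erase ha), mem_univ _, rfl⟩) fun _ _ => rfl

lemma sum_erase_zero_ite_eq_inv {M : Type*} [AddCommMonoid M] (w : F) (g : F → M) :
    ∑ b ∈ univ.erase 0, (if w = b⁻¹ then g b else 0) = if w = 0 then 0 else g w⁻¹ := by
  simp_rw [← inv_eq_iff_eq_inv (a := w)]
  simp [sum_ite_eq, ite_not]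

lemma sum_erase_zero_ite_inv_add_eq_inv {M : Type*} [AddCommMonoid M] {z : F} (hz : z ≠ 0)
    (f : F → F → M) :
    ∑ a ∈ univ.erase 0, ∑ b ∈ univ.erase 0, (if a⁻¹ + z = b⁻¹ then f a b else 0)
      = ∑ t ∈ (univ.erase 0).erase 1, f ((t - 1) / z) ((1 - t⁻¹) / z) := by
  have hfilter : (∑ a ∈ univ.erase 0, if a⁻¹ + z = 0 then 0 else f a (a⁻¹ + z)⁻¹)
      = ∑ a ∈ univ.erase 0 with a⁻¹ + z ≠ 0, f a (a⁻¹ + z)⁻¹ := by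
    rw [sum_filter]; simp_rw [ne_eq, ite_not]
  have hinv {a : F} (ha : a ≠ 0) : a⁻¹ + z = (a * z + 1) / a := by
    field_simp
    ring
  simp_rw [sum_erase_zero_ite_eq_inv, hfilter]
  refine sum_nbij' (fun a => a * z + 1) (fun t => (t - 1) / z) ?_ ?_ ?_ ?_ ?_
  · intro a ha
    simp only [mem_filter, mem_erase, mem_univ, and_true] at ha ⊢
    obtain ⟨ha, haz⟩ := ha
    exact ⟨by simpa using mul_ne_zero ha hz, (div_ne_zero_iff.1 (hinv ha ▸ haz)).1⟩
  · intro t ht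
    simp only [mem_filter, mem_erase, mem_univ, and_true] at ht ⊢
    obtain ⟨ht1, ht0⟩ := ht
    have ht1' : t - 1 ≠ 0 := sub_ne_zero.2 ht1
    refine ⟨div_ne_zero ht1' hz, ?_⟩
    rw [show ((t - 1) / z)⁻¹ + z = z * t / (t - 1) by field_simp; ring]
    exact div_ne_zero (mul_ne_zero hz ht0) ht1'
  · intro a _
    field_simp
    ring
  · intro t _
    field_simp
    ring
  · intro a ha
    simp only [mem_filter, mem_erase, mem_univ, and_true] at ha
    obtain ⟨ha, haz⟩ := ha
    have haz' : a * z + 1 ≠ 0 := (div_ne_zero_iff.1 (hinv ha ▸ haz)).1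
    rw [hinv ha, inv_div]
    congr 1
    · field_simp
      ring
    · field_simp
      ring

variable {R : Type*} [CommRing R] [IsDomain R] {ψ : AddChar F R}

lemma sum_units_addChar_mul (hψ : ψ.IsPrimitive) (w : F) :
    ∑ c : Fˣ, ψ (c * w) = (if w = 0 then (Fintype.card F : R) else 0) - 1 := by
  rw [sum_units_eq_sum_erase_zero (fun c => ψ (c * w)), sum_erase_eq_sub (mem_univ 0),
    AddChar.sum_mulShift w hψ, zero_mul, AddChar.map_zero_eq_one, Nat.cast_ite,
    Nat.cast_zero]

lemma sum_units_addChar_triple (hψ : ψ.IsPrimitive) (x y : F) {z : F} (hz : z ≠ 0) :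
    ∑ a : Fˣ, ∑ b : Fˣ, ∑ c : Fˣ, ψ (c * ((a : F)⁻¹ - (b : F)⁻¹) + a * x + b * y + c * z)
      = Fintype.card F * (∑ a : Fˣ, ψ (x * z⁻¹ * a + -y * z⁻¹ * (a : F)⁻¹))
          * ψ (-x * z⁻¹ + y * z⁻¹)
        - Fintype.card F - (∑ a : Fˣ, ψ (a * x)) * ∑ b : Fˣ, ψ (b * y) := by
  have hc (a b : F) : ∑ c : Fˣ, ψ (c * (a⁻¹ - b⁻¹) + a * x + b * y + c * z)
      = Fintype.card F * (if a⁻¹ + z = b⁻¹ then ψ (a * x + b * y) else 0)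
        - ψ (a * x + b * y) := by
    simp_rw [show ∀ c : F, c * (a⁻¹ - b⁻¹) + a * x + b * y + c * z
      = c * (a⁻¹ + z - b⁻¹) + (a * x + b * y) from fun c => by ring,
      AddChar.map_add_eq_mul, ← sum_mul, sum_units_addChar_mul hψ, sub_eq_zero]
    split_ifs <;> ring
  have hind : ∑ a : Fˣ, ∑ b : Fˣ,
      (if (a : F)⁻¹ + z = (b : F)⁻¹ then ψ (a * x + b * y) else 0)
      = (∑ a : Fˣ, ψ (x * z⁻¹ * a + -y * z⁻¹ * (a : F)⁻¹)) * ψ (-x * z⁻¹ + y * z⁻¹) - 1 :=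
    calc _ = ∑ t ∈ (univ.erase 0).erase 1, ψ ((t - 1) / z * x + (1 - t⁻¹) / z * y) := by
          simpa only [← sum_units_eq_sum_erase_zero]
            using sum_erase_zero_ite_inv_add_eq_inv hz fun a b => ψ (a * x + b * y)
      _ = ∑ t ∈ univ.erase 0, ψ ((t - 1) / z * x + (1 - t⁻¹) / z * y) - 1 := by
          rw [← sum_erase_add _ _ (mem_erase.2 ⟨one_ne_zero, mem_univ 1⟩)]
          simp
      _ = _ := by
          rw [← sum_units_eq_sum_erase_zero, sum_mul]
          congr 1
          refine sum_congr rfl fun t _ => ?_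
          rw [← AddChar.map_add_eq_mul]
          congr 1
          ring
  have hprod : ∑ a : Fˣ, ∑ b : Fˣ, ψ (a * x + b * y)
      = (∑ a : Fˣ, ψ (a * x)) * ∑ b : Fˣ, ψ (b * y) := by
    simp_rw [AddChar.map_add_eq_mul, sum_mul_sum]
  simp_rw [hc, sum_sub_distrib, ← mul_sum, hind, hprod]
  ring

end FiniteField

lemma eZMod_eq_stdAddChar (q : ℕ) [NeZero q] : eZMod q = ZMod.stdAddChar := by
  ext t
  rw [ZMod.stdAddChar_apply, ZMod.toCircle_apply]
  rfl

lemma cq_eq_sum_units {q : ℕ} [Fact q.Prime] (u : ZMod q) :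
    cq q u = ∑ a : (ZMod q)ˣ, ZMod.stdAddChar ((a : ZMod q) * u) := by
  rw [sum_units_addChar_mul (ZMod.isPrimitive_stdAddChar q), ZMod.card, cq]
  split_ifs <;> ring

theorem tripleSum_z_unit_general (q : ℕ) [NeZero q] (hq : q.Prime)
    (x y z : ZMod q) (hz : IsUnit z) :
    tripleSum q x y z
      = (q : ℂ) * kloosterman q (x * z⁻¹) (-y * z⁻¹) * eZMod q (-x * z⁻¹ + y * z⁻¹)
        - (q : ℂ) - cq q x * cq q y := by
  have := Fact.mk hq
  simp only [tripleSum, kloosterman, eZMod_eq_stdAddChar, Units.val_inv_eq_inv_val,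
    cq_eq_sum_units]
  rw [sum_units_addChar_triple (ZMod.isPrimitive_stdAddChar q) x y hz.ne_zero, ZMod.card]

theorem tripleSum_z_unit (q : ℕ) [NeZero q] (hq : q.Prime) (hodd : Odd q)
    (x y z : ZMod q) (hz : IsUnit z) :
    tripleSum q x y z
      = (q : ℂ) * kloosterman q (x * z⁻¹) (-y * z⁻¹) * eZMod q (-x * z⁻¹ + y * z⁻¹)
        - (q : ℂ) - cq q x * cq q y :=
  tripleSum_z_unit_general q hq x y z hz
end
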